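/- arXiv:2107.03229 — 5 statements merged into one kernel-verified Lean document; each statement's English description precedes it below -/
import Mathlib

section
/- Let G ⊆ G_s × G_t and H ⊆ H_s × H_t be relations between finite sets, and let P ⊆ G_s × H_t satisfy P_l ; H = P = G ; P_u˘ for some P_l ⊆ G_s × H_s and P_u ⊆ H_t × G_t. Define P₋(g,h) :⇔ H[h] ⊆ P[g] and P₊(h',g') :⇔ G˘[g'] ⊆ P˘[h']. Then P₋ ; H = P = G ; P₊˘, and moreover P_l ⊆ P₋ and P_u ⊆ P₊. -/
/-- Maximal witnesses of a `Dep`-morphism: if `P = P_l ; H = G ; P_u˘` then the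
maximal witnesses `P₋(g,h) ⇔ H[h] ⊆ P[g]` and `P₊(t,y) ⇔ G˘[y] ⊆ P˘[t]` also
witness `P`, and `P_l ⊆ P₋`, `P_u ⊆ P₊`. -/
theorem stmt_7 {Gs Gt Hs Ht : Type*} [Fintype Gs] [Fintype Gt] [Fintype Hs] [Fintype Ht]
    (G : Gs → Gt → Prop) (H : Hs → Ht → Prop) (P : Gs → Ht → Prop)
    (Pl : Gs → Hs → Prop) (Pu : Ht → Gt → Prop)
    (hl : ∀ (g : Gs) (t : Ht), P g t ↔ ∃ h : Hs, Pl g h ∧ H h t)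
    (hu : ∀ (g : Gs) (t : Ht), P g t ↔ ∃ y : Gt, G g y ∧ Pu t y) :
    (∀ (g : Gs) (t : Ht), P g t ↔ ∃ h : Hs, (∀ t' : Ht, H h t' → P g t') ∧ H h t) ∧
    (∀ (g : Gs) (t : Ht), P g t ↔ ∃ y : Gt, G g y ∧ (∀ x : Gs, G x y → P x t)) ∧
    (∀ (g : Gs) (h : Hs), Pl g h → ∀ t' : Ht, H h t' → P g t') ∧
    (∀ (t : Ht) (y : Gt), Pu t y → ∀ x : Gs, G x y → P x t) := by
  have hPl : ∀ (g : Gs) (h : Hs), Pl g h → ∀ t' : Ht, H h t' → P g t' :=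
    fun g h hgh t' hht' => (hl g t').2 ⟨h, hgh, hht'⟩
  have hPu : ∀ (t : Ht) (y : Gt), Pu t y → ∀ x : Gs, G x y → P x t :=
    fun t y hty x hxy => (hu x t).2 ⟨y, hxy, hty⟩
  refine ⟨fun g t => ⟨fun hp => ?_, fun ⟨h, hmax, hht⟩ => hmax t hht⟩,
    fun g t => ⟨fun hp => ?_, fun ⟨y, hgy, hmax⟩ => hmax g hgy⟩, hPl, hPu⟩
  · obtain ⟨h, hgh, hht⟩ := (hl g t).1 hp
    exact ⟨h, hPl g h hgh, hht⟩
  · obtain ⟨y, hgy, hty⟩ := (hu g t).1 hp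
    exact ⟨y, hgy, hPu t y hty⟩
end

section
/- For any finite lattice S, the map α_S : S → Open(≰_S) sending x to { y ∈ S : x ≰ y } is an isomorphism of join-semilattices, where ≰_S is viewed as a relation on S × S and Open(≰_S) = { ≰_S[X] : X ⊆ S } is ordered by inclusion with joins given by unions. -/
/-- For a finite lattice `S`, the map `α_S : x ↦ { y : ¬ x ≤ y }` is an
isomorphism of join-semilattices onto `Open(≰_S)`: it lands in the open sets,
is injective, hits every open set, and turns joins into unions and `⊥` into `∅`. -/
theorem stmt_9 {S : Type*} [Lattice S] [OrderBot S] [Fintype S] :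
    (∀ x : S, {y : S | ¬ x ≤ y} ∈
        {Y : Set S | ∃ X : Set S, Y = {y : S | ∃ x ∈ X, ¬ x ≤ y}}) ∧
    Function.Injective (fun x : S => {y : S | ¬ x ≤ y}) ∧
    (∀ Y ∈ {Y : Set S | ∃ X : Set S, Y = {y : S | ∃ x ∈ X, ¬ x ≤ y}},
        ∃ x : S, {y : S | ¬ x ≤ y} = Y) ∧
    (∀ x x' : S, {y : S | ¬ x ⊔ x' ≤ y} = {y : S | ¬ x ≤ y} ∪ {y : S | ¬ x' ≤ y}) ∧
    ({y : S | ¬ (⊥ : S) ≤ y} = (∅ : Set S)) := by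
  classical
  refine ⟨?_, ?_, ?_, ?_, ?_⟩
  · intro x
    exact ⟨{x}, by ext y; simp⟩
  · intro x x' h
    simp only [Set.ext_iff, Set.mem_setOf_eq, not_iff_not] at h
    exact le_antisymm ((h x').mpr le_rfl) ((h x).mp le_rfl)
  · rintro Y ⟨X, rfl⟩
    refine ⟨X.toFinset.sup id, ?_⟩
    ext y
    simp only [Set.mem_setOf_eq, Finset.sup_le_iff, id, Set.mem_toFinset]
    push_neg
    rfl
  · intro x x'
    ext y
    rw [Set.mem_union]; simp only [Set.mem_setOf_eq, sup_le_iff]; tauto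
  · ext y
    simp
end

section
/- A biclique cover of a relation R ⊆ X × Y between finite sets of size k exists if and only if there is a finite join-semilattice S with at most k join-irreducible elements and an injective join-preserving map Open(R) → S. Consequently, the bipartite dimension dim(R) equals the minimum of |J(S)| over all finite join-semilattices S admitting a join-preserving injection Open(R) ↪ S. -/
theorem aux_le_of_supIrred {S : Type*} [SemilatticeSup S] [OrderBot S] [Finite S] {a b : S}
    (h : ∀ j : S, SupIrred j → j ≤ a → j ≤ b) : a ≤ b := by
  obtain ⟨s, hs, hirr⟩ := exists_supIrred_decomposition a
  rw [← hs]
  exact Finset.sup_le fun j hj =>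
    h j (hirr hj) (le_of_le_of_eq (Finset.le_sup (f := id) hj) hs)

theorem aux_forward {X Y : Type*} [Fintype X] [Fintype Y] (R : X → Y → Prop) (k : ℕ)
    (B₁ : Fin k → Set X) (B₂ : Fin k → Set Y)
    (hbic : ∀ (i : Fin k), ∀ x ∈ B₁ i, ∀ y ∈ B₂ i, R x y)
    (hcov : ∀ x y, R x y → ∃ i : Fin k, x ∈ B₁ i ∧ y ∈ B₂ i) :
    ∃ (S : Type) (_ : SemilatticeSup S) (_ : OrderBot S) (_ : Fintype S)
        (m : Set Y → S),
      Nat.card {j : S // SupIrred j} ≤ k ∧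
      Set.InjOn m {O : Set Y | ∃ A : Set X, O = {y : Y | ∃ x ∈ A, R x y}} ∧
      (∀ O₁ ∈ {O : Set Y | ∃ A : Set X, O = {y : Y | ∃ x ∈ A, R x y}},
       ∀ O₂ ∈ {O : Set Y | ∃ A : Set X, O = {y : Y | ∃ x ∈ A, R x y}},
          m (O₁ ∪ O₂) = m O₁ ⊔ m O₂) ∧
      m ∅ = ⊥ := by
  classical
  set fm : Set Y → Set (Fin k) := fun O => {i | B₂ i ⊆ O} with hfm
  set gm : Set (Fin k) → Set Y := fun A => ⋃ i ∈ A, B₂ i with hgm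
  have gc0 : ∀ (A : Set (Fin k)) (O : Set Y), gm A ⊆ O ↔ A ⊆ fm O := by
    intro A O
    constructor
    · intro h i hi y hy
      exact h (Set.mem_biUnion hi hy)
    · intro h y hy
      obtain ⟨i, hi, hyi⟩ := Set.mem_iUnion₂.1 hy
      exact h hi hyi
  have fm_mono : ∀ {O O' : Set Y}, O ⊆ O' → fm O ⊆ fm O' :=
    fun h i hi => Set.Subset.trans hi h
  have ext0 : ∀ A : Set (Fin k), A ⊆ fm (gm A) := fun A => (gc0 A (gm A)).1 subset_rfl
  have contr0 : ∀ O : Set Y, gm (fm O) ⊆ O := fun O => (gc0 (fm O) O).2 subset_rfl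
  have gm_mono : ∀ {A A' : Set (Fin k)}, A ⊆ A' → gm A ⊆ gm A' := by
    intro A A' h
    exact (gc0 A (gm A')).2 (Set.Subset.trans h (ext0 A'))
  have hcl : ∀ O : Set Y, fm (gm (fm O)) = fm O :=
    fun O => Set.Subset.antisymm (fm_mono (contr0 O)) (ext0 (fm O))
  set S := {A : Set (Fin k) // fm (gm A) = A} with hS
  set l : Set (Fin k) → S := fun A => ⟨fm (gm A), by
    have := hcl (gm A); simpa using this⟩ with hl
  have hle : ∀ a b : S, a ≤ b ↔ a.1 ⊆ b.1 := fun a b => Iff.rfl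
  have gc : GaloisConnection l (Subtype.val : S → Set (Fin k)) := by
    intro A b
    constructor
    · intro h
      exact Set.Subset.trans (ext0 A) h
    · intro h
      show fm (gm A) ⊆ b.1
      calc fm (gm A) ⊆ fm (gm b.1) := fm_mono (gm_mono h)
        _ = b.1 := b.2
  have gi : GaloisInsertion l (Subtype.val : S → Set (Fin k)) :=
    gc.toGaloisInsertion (fun b => show b.1 ⊆ fm (gm b.1) from ext0 b.1)
  letI instSup : SemilatticeSup S := gi.liftSemilatticeSup
  letI instBot : OrderBot S := gc.liftOrderBot
  haveI : Finite S := Subtype.finite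
  letI instFin : Fintype S := Fintype.ofFinite S
  set m : Set Y → S := fun O => ⟨fm O, hcl O⟩ with hm
  have hsup_def : ∀ a b : S, a ⊔ b = l (a.1 ∪ b.1) := fun a b => rfl
  have hml : ∀ O : Set Y, m O = l (fm O) := by
    intro O
    apply Subtype.ext
    exact (hcl O).symm
  -- open sets are recovered
  have hrec : ∀ A : Set X, gm (fm {y | ∃ x ∈ A, R x y}) = {y | ∃ x ∈ A, R x y} := by
    intro A
    apply Set.Subset.antisymm (contr0 _)
    rintro y ⟨x, hxA, hR⟩
    obtain ⟨i, hx1, hy2⟩ := hcov x y hR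
    have hsub : i ∈ fm {y | ∃ x ∈ A, R x y} :=
      fun y' hy' => ⟨x, hxA, hbic i x hx1 y' hy'⟩
    exact Set.mem_biUnion hsub hy2
  refine ⟨S, instSup, instBot, instFin, m, ?_, ?_, ?_, ?_⟩
  · -- card bound
    have hIrr : ∀ a : S, SupIrred a → ∃ i : Fin k, a = l {i} := by
      intro a ha
      have hdec : (a.1.toFinite.toFinset).sup (fun i => l {i}) = a := by
        apply le_antisymm
        · refine Finset.sup_le fun i hi => gc.l_le ?_
          exact Set.singleton_subset_iff.2 (a.1.toFinite.mem_toFinset.1 hi)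
        · rw [hle]
          intro i hi
          have h1 : l {i} ≤ (a.1.toFinite.toFinset).sup (fun i => l {i}) :=
            Finset.le_sup (f := fun i => l {i}) (a.1.toFinite.mem_toFinset.2 hi)
          have h2 : ({i} : Set (Fin k)) ⊆ (l {i}).1 := ext0 {i}
          exact ((hle _ _).1 h1) (h2 rfl)
      obtain ⟨i, _, hia⟩ := ha.finset_sup_eq hdec
      exact ⟨i, hia.symm⟩
    have hφ : ∀ j : {j : S // SupIrred j}, ∃ i : Fin k, j.1 = l {i} :=
      fun j => hIrr j.1 j.2
    choose φ hφ' using hφ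
    have hφinj : Function.Injective φ := by
      intro a b hab
      apply Subtype.ext
      rw [hφ' a, hφ' b, hab]
    calc Nat.card {j : S // SupIrred j} ≤ Nat.card (Fin k) :=
          Nat.card_le_card_of_injective φ hφinj
      _ = k := by simp
  · -- injectivity
    rintro O₁ ⟨A₁, rfl⟩ O₂ ⟨A₂, rfl⟩ heq
    have h : fm {y | ∃ x ∈ A₁, R x y} = fm {y | ∃ x ∈ A₂, R x y} :=
      congrArg Subtype.val heq
    calc {y | ∃ x ∈ A₁, R x y} = gm (fm {y | ∃ x ∈ A₁, R x y}) := (hrec A₁).symm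
      _ = gm (fm {y | ∃ x ∈ A₂, R x y}) := by rw [h]
      _ = {y | ∃ x ∈ A₂, R x y} := hrec A₂
  · -- sup preservation
    rintro O₁ ⟨A₁, rfl⟩ O₂ ⟨A₂, rfl⟩
    have gm_union : ∀ A B : Set (Fin k), gm (A ∪ B) = gm A ∪ gm B := by
      intro A B
      simp [hgm, Set.biUnion_union]
    rw [hml, hml, hml, ← gc.l_sup]
    apply Subtype.ext
    show fm (gm (fm ({y | ∃ x ∈ A₁, R x y} ∪ {y | ∃ x ∈ A₂, R x y}))) =
      fm (gm (fm {y | ∃ x ∈ A₁, R x y} ∪ fm {y | ∃ x ∈ A₂, R x y}))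
    rw [gm_union, hrec A₁, hrec A₂, hcl]
  · -- bot
    apply Subtype.ext
    show fm ∅ = fm (gm ⊥)
    rw [Set.bot_eq_empty]
    have : gm (∅ : Set (Fin k)) = ∅ := by simp [hgm]
    rw [this]
theorem aux_reverse {X Y : Type*} [Fintype X] [Fintype Y] (R : X → Y → Prop) (k : ℕ)
    (h : ∃ (S : Type) (_ : SemilatticeSup S) (_ : OrderBot S) (_ : Fintype S)
        (m : Set Y → S),
      Nat.card {j : S // SupIrred j} ≤ k ∧
      Set.InjOn m {O : Set Y | ∃ A : Set X, O = {y : Y | ∃ x ∈ A, R x y}} ∧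
      (∀ O₁ ∈ {O : Set Y | ∃ A : Set X, O = {y : Y | ∃ x ∈ A, R x y}},
       ∀ O₂ ∈ {O : Set Y | ∃ A : Set X, O = {y : Y | ∃ x ∈ A, R x y}},
          m (O₁ ∪ O₂) = m O₁ ⊔ m O₂) ∧
      m ∅ = ⊥) :
    ∃ (B₁ : Fin k → Set X) (B₂ : Fin k → Set Y),
      (∀ (i : Fin k), ∀ x ∈ B₁ i, ∀ y ∈ B₂ i, R x y) ∧
      (∀ x y, R x y → ∃ i : Fin k, x ∈ B₁ i ∧ y ∈ B₂ i) := by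
  classical
  obtain ⟨S, _, _, _, m, hcard, hinj, hsup, hbot⟩ := h
  set Nx : X → Set Y := fun x => {y | ∃ x' ∈ ({x} : Set X), R x' y} with hNx
  have hNop : ∀ x, Nx x ∈ {O : Set Y | ∃ A : Set X, O = {y : Y | ∃ x ∈ A, R x y}} :=
    fun x => ⟨{x}, rfl⟩
  have hUnion : ∀ A₁ A₂ : Set X,
      {y : Y | ∃ x ∈ A₁, R x y} ∪ {y : Y | ∃ x ∈ A₂, R x y}
        = {y : Y | ∃ x ∈ A₁ ∪ A₂, R x y} := by
    intro A₁ A₂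
    ext y
    simp only [Set.mem_union, Set.mem_setOf_eq]
    constructor
    · rintro (⟨x, hx, hr⟩ | ⟨x, hx, hr⟩)
      · exact ⟨x, Or.inl hx, hr⟩
      · exact ⟨x, Or.inr hx, hr⟩
    · rintro ⟨x, hx | hx, hr⟩
      · exact Or.inl ⟨x, hx, hr⟩
      · exact Or.inr ⟨x, hx, hr⟩
  haveI : Fintype {j : S // SupIrred j} := Fintype.ofFinite _
  have hcard' : Fintype.card {j : S // SupIrred j} ≤ k := by
    rw [← Nat.card_eq_fintype_card]; exact hcard
  set e : {j : S // SupIrred j} → Fin k :=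
    fun j => Fin.castLE hcard' (Fintype.equivFin _ j) with he
  have einj : Function.Injective e := by
    intro a b hab
    apply (Fintype.equivFin _).injective
    exact Fin.castLE_injective hcard' hab
  have key : ∀ x y, R x y → ∃ j : {j : S // SupIrred j},
      j.1 ≤ m (Nx x) ∧ ∀ x', j.1 ≤ m (Nx x') → R x' y := by
    intro x y hR
    set O : Set Y := {y' | ∃ x' ∈ {x'' | ¬ R x'' y}, R x' y'} with hO
    have hOop : O ∈ {O : Set Y | ∃ A : Set X, O = {y : Y | ∃ x ∈ A, R x y}} :=
      ⟨{x'' | ¬ R x'' y}, rfl⟩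
    have hyO : y ∉ O := by
      rintro ⟨x', hx', hr⟩
      exact hx' hr
    have hyN : y ∈ Nx x := ⟨x, rfl, hR⟩
    have hnotle : ¬ m (Nx x) ≤ m O := by
      intro hle
      have h1 : Nx x ∪ O = {y' : Y | ∃ x' ∈ ({x} ∪ {x'' | ¬ R x'' y} : Set X), R x' y'} :=
        hUnion _ _
      have h2 : m (Nx x ∪ O) = m O := by
        rw [hsup _ (hNop x) _ hOop]
        exact sup_eq_right.2 hle
      have h4 : Nx x ∪ O = O := by
        refine hinj ?_ hOop h2
        rw [h1]
        exact ⟨_, rfl⟩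
      exact hyO (h4 ▸ Set.mem_union_left _ hyN)
    obtain ⟨j, hjirr, hjle, hjnle⟩ : ∃ j, SupIrred j ∧ j ≤ m (Nx x) ∧ ¬ j ≤ m O := by
      by_contra hc
      push_neg at hc
      exact hnotle (aux_le_of_supIrred fun j hj hle => hc j hj hle)
    refine ⟨⟨j, hjirr⟩, hjle, fun x' hle' => ?_⟩
    by_contra hnr
    have hXeq : ({x'} ∪ {x'' | ¬ R x'' y} : Set X) = {x'' | ¬ R x'' y} :=
      Set.union_eq_self_of_subset_left (Set.singleton_subset_iff.2 hnr)
    have hsubopen : Nx x' ∪ O = O := by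
      rw [hNx, hO, hUnion, hXeq]
    have hmo : m (Nx x') ⊔ m O = m O := by
      rw [← hsup _ (hNop x') _ hOop, hsubopen]
    exact hjnle (le_trans (le_trans hle' le_sup_left) hmo.le)
  refine ⟨fun i => {x | ∃ j : {j : S // SupIrred j}, e j = i ∧ j.1 ≤ m (Nx x)},
    fun i => {y | ∀ j : {j : S // SupIrred j}, e j = i → ∀ x, j.1 ≤ m (Nx x) → R x y},
    ?_, ?_⟩
  · rintro i x ⟨j, rfl, hle⟩ y hy
    exact hy j rfl x hle
  · intro x y hR
    obtain ⟨j, hj1, hj2⟩ := key x y hR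
    refine ⟨e j, ⟨j, rfl, hj1⟩, fun j' hj' x' hle => ?_⟩
    cases einj hj'
    exact hj2 x' hle

/-- A biclique cover of `R` of size `k` exists iff there is a finite
join-semilattice `S` with at most `k` join-irreducibles and an injective
join-preserving map `Open(R) ↪ S`. Consequently the bipartite dimension
`dim R` equals the minimum of `|J(S)|` over all such `S`. -/
theorem stmt_12 {X Y : Type*} [Fintype X] [Fintype Y] (R : X → Y → Prop) :
    (∀ k : ℕ,
      (∃ (B₁ : Fin k → Set X) (B₂ : Fin k → Set Y),
        (∀ (i : Fin k), ∀ x ∈ B₁ i, ∀ y ∈ B₂ i, R x y) ∧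
        (∀ x y, R x y → ∃ i : Fin k, x ∈ B₁ i ∧ y ∈ B₂ i)) ↔
      (∃ (S : Type) (_ : SemilatticeSup S) (_ : OrderBot S) (_ : Fintype S)
          (m : Set Y → S),
        Nat.card {j : S // SupIrred j} ≤ k ∧
        Set.InjOn m {O : Set Y | ∃ A : Set X, O = {y : Y | ∃ x ∈ A, R x y}} ∧
        (∀ O₁ ∈ {O : Set Y | ∃ A : Set X, O = {y : Y | ∃ x ∈ A, R x y}},
         ∀ O₂ ∈ {O : Set Y | ∃ A : Set X, O = {y : Y | ∃ x ∈ A, R x y}},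
            m (O₁ ∪ O₂) = m O₁ ⊔ m O₂) ∧
        m ∅ = ⊥)) ∧
    sInf {k : ℕ |
        ∃ (B₁ : Fin k → Set X) (B₂ : Fin k → Set Y),
          (∀ (i : Fin k), ∀ x ∈ B₁ i, ∀ y ∈ B₂ i, R x y) ∧
          (∀ x y, R x y → ∃ i : Fin k, x ∈ B₁ i ∧ y ∈ B₂ i)} =
      sInf {n : ℕ |
        ∃ (S : Type) (_ : SemilatticeSup S) (_ : OrderBot S) (_ : Fintype S)
            (m : Set Y → S),
          Nat.card {j : S // SupIrred j} = n ∧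
          Set.InjOn m {O : Set Y | ∃ A : Set X, O = {y : Y | ∃ x ∈ A, R x y}} ∧
          (∀ O₁ ∈ {O : Set Y | ∃ A : Set X, O = {y : Y | ∃ x ∈ A, R x y}},
           ∀ O₂ ∈ {O : Set Y | ∃ A : Set X, O = {y : Y | ∃ x ∈ A, R x y}},
              m (O₁ ∪ O₂) = m O₁ ⊔ m O₂) ∧
          m ∅ = ⊥} := by
  have part1 : ∀ k : ℕ,
      (∃ (B₁ : Fin k → Set X) (B₂ : Fin k → Set Y),
        (∀ (i : Fin k), ∀ x ∈ B₁ i, ∀ y ∈ B₂ i, R x y) ∧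
        (∀ x y, R x y → ∃ i : Fin k, x ∈ B₁ i ∧ y ∈ B₂ i)) ↔
      (∃ (S : Type) (_ : SemilatticeSup S) (_ : OrderBot S) (_ : Fintype S)
          (m : Set Y → S),
        Nat.card {j : S // SupIrred j} ≤ k ∧
        Set.InjOn m {O : Set Y | ∃ A : Set X, O = {y : Y | ∃ x ∈ A, R x y}} ∧
        (∀ O₁ ∈ {O : Set Y | ∃ A : Set X, O = {y : Y | ∃ x ∈ A, R x y}},
         ∀ O₂ ∈ {O : Set Y | ∃ A : Set X, O = {y : Y | ∃ x ∈ A, R x y}},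
            m (O₁ ∪ O₂) = m O₁ ⊔ m O₂) ∧
        m ∅ = ⊥) := by
    intro k
    constructor
    · rintro ⟨B₁, B₂, h1, h2⟩
      exact aux_forward R k B₁ B₂ h1 h2
    · intro h
      exact aux_reverse R k h
  refine ⟨part1, ?_⟩
  set P : Set ℕ := {k : ℕ |
      ∃ (B₁ : Fin k → Set X) (B₂ : Fin k → Set Y),
        (∀ (i : Fin k), ∀ x ∈ B₁ i, ∀ y ∈ B₂ i, R x y) ∧
        (∀ x y, R x y → ∃ i : Fin k, x ∈ B₁ i ∧ y ∈ B₂ i)} with hP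
  set Q : Set ℕ := {n : ℕ |
      ∃ (S : Type) (_ : SemilatticeSup S) (_ : OrderBot S) (_ : Fintype S)
          (m : Set Y → S),
        Nat.card {j : S // SupIrred j} = n ∧
        Set.InjOn m {O : Set Y | ∃ A : Set X, O = {y : Y | ∃ x ∈ A, R x y}} ∧
        (∀ O₁ ∈ {O : Set Y | ∃ A : Set X, O = {y : Y | ∃ x ∈ A, R x y}},
         ∀ O₂ ∈ {O : Set Y | ∃ A : Set X, O = {y : Y | ∃ x ∈ A, R x y}},
            m (O₁ ∪ O₂) = m O₁ ⊔ m O₂) ∧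
        m ∅ = ⊥} with hQ
  have hQP : Q ⊆ P := by
    rintro n ⟨S, i1, i2, i3, mm, hc, h2, h3, h4⟩
    exact (part1 n).2 ⟨S, i1, i2, i3, mm, hc.le, h2, h3, h4⟩
  have hPQ : ∀ k ∈ P, ∃ n ∈ Q, n ≤ k := by
    intro k hk
    obtain ⟨S, i1, i2, i3, mm, hc, h2, h3, h4⟩ := (part1 k).1 hk
    exact ⟨_, ⟨S, i1, i2, i3, mm, rfl, h2, h3, h4⟩, hc⟩
  rcases Q.eq_empty_or_nonempty with hQe | hQn
  · have hPe : P = ∅ := by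
      ext k
      simp only [Set.mem_empty_iff_false, iff_false]
      intro hk
      obtain ⟨n, hn, _⟩ := hPQ k hk
      rw [hQe] at hn
      exact hn
    rw [hPe, hQe]
  · apply le_antisymm
    · exact Nat.sInf_le (hQP (Nat.sInf_mem hQn))
    · have hPn : P.Nonempty := ⟨_, hQP (Nat.sInf_mem hQn)⟩
      obtain ⟨n, hn, hnk⟩ := hPQ _ (Nat.sInf_mem hPn)
      exact le_trans (Nat.sInf_le hn) hnk
end

section
/- Bipartite dimension is invariant under Dep-isomorphism: if the relations R and S between finite sets are isomorphic objects in the category Dep (equivalently, if the semilattices Open(R) and Open(S) are isomorphic), then dim(R) = dim(S). -/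
namespace Stmt13

variable {X Y X' Y' : Type*}

def im (R : X → Y → Prop) (A : Set X) : Set Y := {y | ∃ x ∈ A, R x y}

lemma im_empty (R : X → Y → Prop) : im R (∅ : Set X) = ∅ := by
  ext y; simp [im]

lemma im_union (R : X → Y → Prop) (A B : Set X) :
    im R (A ∪ B) = im R A ∪ im R B := by
  ext y
  constructor
  · rintro ⟨x, hx | hx, h⟩
    · exact Or.inl ⟨x, hx, h⟩
    · exact Or.inr ⟨x, hx, h⟩
  · rintro (⟨x, hx, h⟩ | ⟨x, hx, h⟩)
    · exact ⟨x, Or.inl hx, h⟩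
    · exact ⟨x, Or.inr hx, h⟩

section core

variable [Fintype X]
variable (R : X → Y → Prop) (S : X' → Y' → Prop) (e : Set Y → Set Y')

lemma e_finset (hsup : ∀ A B : Set X, e (im R A ∪ im R B) = e (im R A) ∪ e (im R B))
    (hbot : e ∅ = ∅) (s : Finset X) :
    e (im R ↑s) = ⋃ x ∈ s, e (im R {x}) := by
  classical
  induction s using Finset.induction_on with
  | empty => simp [im_empty, hbot]
  | @insert a s ha ih =>
    have hc : (↑(insert a s) : Set X) = {a} ∪ ↑s := by
      rw [Finset.coe_insert, Set.insert_eq]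
    rw [hc, im_union, hsup, ih, Finset.set_biUnion_insert]

lemma mem_e_im (hsup : ∀ A B : Set X, e (im R A ∪ im R B) = e (im R A) ∪ e (im R B))
    (hbot : e ∅ = ∅) (A : Set X) (y' : Y') :
    y' ∈ e (im R A) ↔ ∃ x ∈ A, y' ∈ e (im R {x}) := by
  classical
  have hA : A = ↑A.toFinset := (Set.coe_toFinset A).symm
  rw [hA, e_finset R e hsup hbot A.toFinset]
  simp

lemma e_mono (hsup : ∀ A B : Set X, e (im R A ∪ im R B) = e (im R A) ∪ e (im R B))
    (A B : Set X) (h : im R A ⊆ im R B) : e (im R A) ⊆ e (im R B) := by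
  have h2 : im R A ∪ im R B = im R B := Set.union_eq_self_of_subset_left h
  calc e (im R A) ⊆ e (im R A) ∪ e (im R B) := Set.subset_union_left
    _ = e (im R A ∪ im R B) := (hsup A B).symm
    _ = e (im R B) := by rw [h2]

lemma core (hsup : ∀ A B : Set X, e (im R A ∪ im R B) = e (im R A) ∪ e (im R B))
    (hbot : e ∅ = ∅)
    (hsurj : ∀ x' : X', ∃ A : Set X, e (im R A) = im S {x'})
    {k : ℕ} (B₁ : Fin k → Set X) (B₂ : Fin k → Set Y)
    (h1 : ∀ i, ∀ x ∈ B₁ i, ∀ y ∈ B₂ i, R x y)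
    (h2 : ∀ x y, R x y → ∃ i, x ∈ B₁ i ∧ y ∈ B₂ i) :
    ∃ (C₁ : Fin k → Set X') (C₂ : Fin k → Set Y'),
      (∀ i, ∀ x ∈ C₁ i, ∀ y ∈ C₂ i, S x y) ∧
      (∀ x y, S x y → ∃ i, x ∈ C₁ i ∧ y ∈ C₂ i) := by
  classical
  choose A0 hA0 using hsurj
  -- saturated version of A0
  set Asat : X' → Set X := fun x' => {x | im R {x} ⊆ im R (A0 x')} with hAsat
  have hsat : ∀ x', im R (Asat x') = im R (A0 x') := by
    intro x'
    apply subset_antisymm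
    · rintro y ⟨x, hx, hxy⟩
      exact hx ⟨x, rfl, hxy⟩
    · rintro y ⟨x, hx, hxy⟩
      refine ⟨x, ?_, hxy⟩
      rintro z ⟨w, hw, hzw⟩
      rcases hw with rfl
      exact ⟨w, hx, hzw⟩
  have hAe : ∀ x', e (im R (Asat x')) = im S {x'} := by
    intro x'; rw [hsat]; exact hA0 x'
  refine ⟨fun i => {x' | ∃ x ∈ Asat x', x ∈ B₁ i},
          fun i => {y' | ∀ x ∈ B₁ i, y' ∈ e (im R {x})}, ?_, ?_⟩
  · intro i x' hx' y' hy'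
    obtain ⟨x₁, hx₁s, hx₁b⟩ := hx'
    have hmem : y' ∈ e (im R (Asat x')) :=
      (mem_e_im R e hsup hbot (Asat x') y').2 ⟨x₁, hx₁s, hy' x₁ hx₁b⟩
    rw [hAe] at hmem
    obtain ⟨x'', hx'', h⟩ := hmem
    rcases hx'' with rfl
    exact h
  · intro x' y' hS
    have hy' : y' ∈ e (im R (Asat x')) := by
      rw [hAe]; exact ⟨x', rfl, hS⟩
    obtain ⟨x₀, hx₀, hy₀⟩ := (mem_e_im R e hsup hbot (Asat x') y').1 hy'
    set V : Set Y := im R {x | y' ∉ e (im R {x})} with hV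
    have hyV : y' ∉ e V := by
      intro h
      obtain ⟨x, hx, hmem⟩ := (mem_e_im R e hsup hbot _ y').1 h
      exact hx hmem
    have hns : ¬ im R {x₀} ⊆ V := by
      intro h
      exact hyV (e_mono R e hsup _ _ h hy₀)
    obtain ⟨y, hy1, hy2⟩ := Set.not_subset.1 hns
    have hRy : R x₀ y := by
      obtain ⟨x, hx, h⟩ := hy1
      rcases hx with rfl
      exact h
    obtain ⟨i, hi1, hi2⟩ := h2 x₀ y hRy
    refine ⟨i, ⟨x₀, hx₀, hi1⟩, ?_⟩
    intro x hx
    by_contra hc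
    exact hy2 ⟨x, hc, h1 i x hx y hi2⟩

end core

open Classical in
noncomputable def inv (R : X → Y → Prop) (e : Set Y → Set Y') : Set Y' → Set Y :=
  fun O => if h : ∃ A : Set X, e (im R A) = O then im R h.choose else ∅

lemma inv_e (R : X → Y → Prop) (e : Set Y → Set Y')
    (hinj : ∀ A B : Set X, e (im R A) = e (im R B) → im R A = im R B)
    (A : Set X) : inv R e (e (im R A)) = im R A := by
  have hex : ∃ C : Set X, e (im R C) = e (im R A) := ⟨A, rfl⟩
  classical
  unfold inv
  rw [dif_pos hex]
  exact hinj _ _ hex.choose_spec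

end Stmt13

open Stmt13 in
/-- Bipartite dimension is invariant under Dep-isomorphism: if the
join-semilattices `Open(R)` and `Open(S)` are isomorphic (via a bijection
preserving unions and the empty set), then `dim R = dim S`. -/
theorem stmt_13 {X Y X' Y' : Type*} [Fintype X] [Fintype Y] [Fintype X'] [Fintype Y']
    (R : X → Y → Prop) (S : X' → Y' → Prop)
    (e : Set Y → Set Y')
    (hbij : Set.BijOn e {O : Set Y | ∃ A : Set X, O = {y : Y | ∃ x ∈ A, R x y}}
        {O : Set Y' | ∃ A : Set X', O = {y : Y' | ∃ x ∈ A, S x y}})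
    (hsup : ∀ O₁ ∈ {O : Set Y | ∃ A : Set X, O = {y : Y | ∃ x ∈ A, R x y}},
            ∀ O₂ ∈ {O : Set Y | ∃ A : Set X, O = {y : Y | ∃ x ∈ A, R x y}},
        e (O₁ ∪ O₂) = e O₁ ∪ e O₂)
    (hbot : e ∅ = ∅) :
    sInf {k : ℕ |
        ∃ (B₁ : Fin k → Set X) (B₂ : Fin k → Set Y),
          (∀ (i : Fin k), ∀ x ∈ B₁ i, ∀ y ∈ B₂ i, R x y) ∧
          (∀ x y, R x y → ∃ i : Fin k, x ∈ B₁ i ∧ y ∈ B₂ i)} =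
      sInf {k : ℕ |
        ∃ (B₁ : Fin k → Set X') (B₂ : Fin k → Set Y'),
          (∀ (i : Fin k), ∀ x ∈ B₁ i, ∀ y ∈ B₂ i, S x y) ∧
          (∀ x y, S x y → ∃ i : Fin k, x ∈ B₁ i ∧ y ∈ B₂ i)} := by
  classical
  -- repackage hypotheses in terms of `im`
  have hmemR : ∀ A : Set X,
      im R A ∈ {O : Set Y | ∃ A : Set X, O = {y : Y | ∃ x ∈ A, R x y}} :=
    fun A => ⟨A, rfl⟩
  have hsup' : ∀ A B : Set X, e (im R A ∪ im R B) = e (im R A) ∪ e (im R B) :=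
    fun A B => hsup _ (hmemR A) _ (hmemR B)
  have hsurjO : ∀ A' : Set X', ∃ A : Set X, e (im R A) = im S A' := by
    intro A'
    obtain ⟨O, hO, hOe⟩ := hbij.surjOn (show im S A' ∈
      {O : Set Y' | ∃ A : Set X', O = {y : Y' | ∃ x ∈ A, S x y}} from ⟨A', rfl⟩)
    obtain ⟨A, rfl⟩ := hO
    exact ⟨A, hOe⟩
  have hsurjE : ∀ x' : X', ∃ A : Set X, e (im R A) = im S {x'} := fun x' => hsurjO {x'}
  have hinj : ∀ A B : Set X, e (im R A) = e (im R B) → im R A = im R B :=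
    fun A B h => hbij.injOn (hmemR A) (hmemR B) h
  have hmaps : ∀ A : Set X, ∃ A' : Set X', e (im R A) = im S A' := by
    intro A
    obtain ⟨A', hA'⟩ := hbij.mapsTo (hmemR A)
    exact ⟨A', hA'⟩
  -- properties of the inverse map
  have hinv_e : ∀ A : Set X, inv R e (e (im R A)) = im R A := inv_e R e hinj
  have hbot' : inv R e (∅ : Set Y') = ∅ := by
    have h1 : e (im R (∅ : Set X)) = ∅ := by rw [im_empty, hbot]
    have := hinv_e (∅ : Set X)
    rw [h1, im_empty] at this
    exact this
  have hsup'' : ∀ A B : Set X',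
      inv R e (im S A ∪ im S B) = inv R e (im S A) ∪ inv R e (im S B) := by
    intro A' B'
    obtain ⟨A₁, hA₁⟩ := hsurjO A'
    obtain ⟨A₂, hA₂⟩ := hsurjO B'
    have hu : im S A' ∪ im S B' = e (im R (A₁ ∪ A₂)) := by
      rw [im_union, hsup', hA₁, hA₂]
    rw [hu, hinv_e, ← hA₁, ← hA₂, hinv_e, hinv_e, im_union]
  have hsurj' : ∀ x : X, ∃ A' : Set X', inv R e (im S A') = im R {x} := by
    intro x
    obtain ⟨A', hA'⟩ := hmaps {x}
    exact ⟨A', by rw [← hA', hinv_e]⟩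
  -- set equality
  have hset : {k : ℕ |
        ∃ (B₁ : Fin k → Set X) (B₂ : Fin k → Set Y),
          (∀ (i : Fin k), ∀ x ∈ B₁ i, ∀ y ∈ B₂ i, R x y) ∧
          (∀ x y, R x y → ∃ i : Fin k, x ∈ B₁ i ∧ y ∈ B₂ i)} =
      {k : ℕ |
        ∃ (B₁ : Fin k → Set X') (B₂ : Fin k → Set Y'),
          (∀ (i : Fin k), ∀ x ∈ B₁ i, ∀ y ∈ B₂ i, S x y) ∧
          (∀ x y, S x y → ∃ i : Fin k, x ∈ B₁ i ∧ y ∈ B₂ i)} := by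
    ext k
    constructor
    · rintro ⟨B₁, B₂, h1, h2⟩
      obtain ⟨C₁, C₂, hc1, hc2⟩ := core R S e hsup' hbot hsurjE B₁ B₂ h1 h2
      exact ⟨C₁, C₂, hc1, hc2⟩
    · rintro ⟨B₁, B₂, h1, h2⟩
      obtain ⟨C₁, C₂, hc1, hc2⟩ := core S R (inv R e) hsup'' hbot' hsurj' B₁ B₂ h1 h2
      exact ⟨C₁, C₂, hc1, hc2⟩
  rw [hset]
end

section
/- A join-preserving map f : S → T between finite lattices factorizes through a finite Boolean algebra if and only if f is a pointwise join of maps of the form s ⊛ t (where (s ⊛ t)(x) = t if x ≰ s, else ⊥), if and only if f is a pointwise join of maps m ⊛ j with m meet-irreducible in S and j join-irreducible in T. -/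
open scoped Classical

section Aux

variable {α β γ : Type*}

/-- A sup-bot-preserving map commutes with finite sups. -/
lemma aux_map_finsup [SemilatticeSup β] [OrderBot β] [SemilatticeSup γ] [OrderBot γ]
    (F : β → γ) (hF : ∀ x y, F (x ⊔ y) = F x ⊔ F y) (hFb : F ⊥ = ⊥)
    (s : Finset α) (u : α → β) : F (s.sup u) = s.sup (fun a => F (u a)) := by
  induction s using Finset.cons_induction with
  | empty => simpa
  | cons a s ha ih => simp [Finset.sup_cons, hF, ih]

lemma aux_mem_finsup {Z : Type*} (s : Finset α) (u : α → Set Z) (z : Z) :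
    z ∈ s.sup u ↔ ∃ x ∈ s, z ∈ u x := by
  induction s using Finset.cons_induction with
  | empty => simp
  | cons a s ha ih => simp [Finset.sup_cons, ih, Set.mem_union]

lemma aux_sup_reindex [Fintype β] [SemilatticeSup γ] [OrderBot γ] {n : ℕ}
    (e : β ≃ Fin n) (F : β → γ) :
    (Finset.univ.sup fun k => F (e.symm k)) = Finset.univ.sup F := by
  apply le_antisymm
  · exact Finset.sup_le fun k _ => Finset.le_sup (Finset.mem_univ _)
  · refine Finset.sup_le fun x _ => ?_
    have := Finset.le_sup (f := fun k => F (e.symm k)) (Finset.mem_univ (e x))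
    simpa using this

end Aux

/-- A join-preserving map `f : S → T` between finite lattices factorizes
through a finite Boolean algebra iff it is a pointwise join of maps `s ⊛ t`
iff it is a pointwise join of maps `m ⊛ j` with `m` meet-irreducible in `S`
and `j` join-irreducible in `T`. -/
theorem stmt_17 {S T : Type*} [Lattice S] [BoundedOrder S] [Fintype S]
    [Lattice T] [BoundedOrder T] [Fintype T]
    (f : S → T) (hf : ∀ x y : S, f (x ⊔ y) = f x ⊔ f y) (hbot : f ⊥ = ⊥) :
    ((∃ (Z : Type) (_ : Fintype Z) (g : S → Set Z) (h : Set Z → T),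
        (∀ x y : S, g (x ⊔ y) = g x ∪ g y) ∧ g ⊥ = ∅ ∧
        (∀ A B : Set Z, h (A ∪ B) = h A ⊔ h B) ∧ h ∅ = ⊥ ∧ f = h ∘ g) ↔
      (∃ (n : ℕ) (a : Fin n → S) (b : Fin n → T),
        f = fun x => Finset.univ.sup fun i : Fin n => if x ≤ a i then (⊥ : T) else b i)) ∧
    ((∃ (n : ℕ) (a : Fin n → S) (b : Fin n → T),
        f = fun x => Finset.univ.sup fun i : Fin n => if x ≤ a i then (⊥ : T) else b i) ↔
      (∃ (n : ℕ) (a : Fin n → S) (b : Fin n → T),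
        (∀ i : Fin n, InfIrred (a i)) ∧ (∀ i : Fin n, SupIrred (b i)) ∧
        f = fun x => Finset.univ.sup fun i : Fin n => if x ≤ a i then (⊥ : T) else b i)) := by
  -- Implication B → A : from pointwise-join form, build a factorization through `Set (Fin n)`.
  have hBA : (∃ (n : ℕ) (a : Fin n → S) (b : Fin n → T),
        f = fun x => Finset.univ.sup fun i : Fin n => if x ≤ a i then (⊥ : T) else b i) →
      (∃ (Z : Type) (_ : Fintype Z) (g : S → Set Z) (h : Set Z → T),
        (∀ x y : S, g (x ⊔ y) = g x ∪ g y) ∧ g ⊥ = ∅ ∧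
        (∀ A B : Set Z, h (A ∪ B) = h A ⊔ h B) ∧ h ∅ = ⊥ ∧ f = h ∘ g) := by
    rintro ⟨n, a, b, rfl⟩
    refine ⟨Fin n, inferInstance, fun x => {i | ¬ x ≤ a i},
      fun A => Finset.univ.sup (fun i => if i ∈ A then b i else ⊥), ?_, ?_, ?_, ?_, ?_⟩
    · intro x y
      ext i
      simp only [Set.mem_setOf_eq, Set.mem_union, sup_le_iff]
      tauto
    · ext i; simp
    · intro A B
      rw [← Finset.sup_sup]
      refine Finset.sup_congr rfl fun i _ => ?_
      by_cases hA : i ∈ A <;> by_cases hB : i ∈ B <;> simp [hA, hB]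
    · simp
    · funext x
      simp only [Function.comp_apply]
      refine Finset.sup_congr rfl fun i _ => ?_
      by_cases hx : x ≤ a i <;> simp [hx]
  -- Implication A → B.
  have hAB : (∃ (Z : Type) (_ : Fintype Z) (g : S → Set Z) (h : Set Z → T),
        (∀ x y : S, g (x ⊔ y) = g x ∪ g y) ∧ g ⊥ = ∅ ∧
        (∀ A B : Set Z, h (A ∪ B) = h A ⊔ h B) ∧ h ∅ = ⊥ ∧ f = h ∘ g) →
      (∃ (n : ℕ) (a : Fin n → S) (b : Fin n → T),
        f = fun x => Finset.univ.sup fun i : Fin n => if x ≤ a i then (⊥ : T) else b i) := by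
    rintro ⟨Z, _, g, h, hg, hgbot, hh, hhbot, rfl⟩
    have hgmono : ∀ {x y : S}, x ≤ y → g x ⊆ g y := by
      intro x y hxy
      have : g y = g x ∪ g y := by rw [← hg, sup_eq_right.2 hxy]
      rw [this]; exact Set.subset_union_left
    set A : Z → S := fun z => (Finset.univ.filter (fun x : S => z ∉ g x)).sup id with hA
    have hgA : ∀ z : Z, z ∉ g (A z) := by
      intro z hz
      have := aux_map_finsup g hg (by simpa using hgbot)
        (Finset.univ.filter (fun x : S => z ∉ g x)) id
      rw [hA] at hz
      rw [this, aux_mem_finsup] at hz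
      obtain ⟨x, hx, hzx⟩ := hz
      exact (Finset.mem_filter.1 hx).2 hzx
    have key : ∀ (z : Z) (x : S), z ∈ g x ↔ ¬ x ≤ A z := by
      intro z x
      constructor
      · intro hz hxA
        exact hgA z (hgmono hxA hz)
      · intro hx
        by_contra hz
        exact hx (Finset.le_sup (f := id) (Finset.mem_filter.2 ⟨Finset.mem_univ _, hz⟩))
    -- reindex Z by Fin (card Z)
    obtain e := Fintype.equivFin Z
    refine ⟨Fintype.card Z, fun k => A (e.symm k), fun k => h {(e.symm k : Z)}, ?_⟩
    funext x
    simp only [Function.comp_apply]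
    rw [aux_sup_reindex e (fun z : Z => if x ≤ A z then (⊥ : T) else h {z})]
    have hgx : g x = Finset.univ.sup (fun z : Z => if z ∈ g x then ({z} : Set Z) else ∅) := by
      ext z'
      rw [aux_mem_finsup]
      constructor
      · intro hz'
        exact ⟨z', Finset.mem_univ _, by simp [hz']⟩
      · rintro ⟨z, _, hz⟩
        by_cases hzg : z ∈ g x
        · simp only [if_pos hzg, Set.mem_singleton_iff] at hz
          exact hz ▸ hzg
        · simp [if_neg hzg] at hz
    rw [hgx, aux_map_finsup h (fun A B => by simpa using hh A B) (by simpa using hhbot)]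
    refine Finset.sup_congr rfl fun z _ => ?_
    by_cases hz : z ∈ g x
    · rw [if_pos hz, if_neg ((key z x).1 hz)]
    · rw [if_neg hz, if_pos (by by_contra hx; exact hz ((key z x).2 hx))]
      exact hhbot
  -- Implication B → C.
  have hBC : (∃ (n : ℕ) (a : Fin n → S) (b : Fin n → T),
        f = fun x => Finset.univ.sup fun i : Fin n => if x ≤ a i then (⊥ : T) else b i) →
      (∃ (n : ℕ) (a : Fin n → S) (b : Fin n → T),
        (∀ i : Fin n, InfIrred (a i)) ∧ (∀ i : Fin n, SupIrred (b i)) ∧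
        f = fun x => Finset.univ.sup fun i : Fin n => if x ≤ a i then (⊥ : T) else b i) := by
    rintro ⟨n, a, b, rfl⟩
    set I := {p : S × T // InfIrred p.1 ∧ SupIrred p.2 ∧ ∃ i, a i ≤ p.1 ∧ p.2 ≤ b i} with hI
    haveI : Fintype I := Fintype.ofFinite I
    obtain e := Fintype.equivFin I
    refine ⟨Fintype.card I, fun k => (e.symm k).1.1, fun k => (e.symm k).1.2,
      fun k => (e.symm k).2.1, fun k => (e.symm k).2.2.1, ?_⟩
    funext x
    rw [aux_sup_reindex e (fun p : I => if x ≤ p.1.1 then (⊥ : T) else p.1.2)]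
    apply le_antisymm
    · refine Finset.sup_le fun i _ => ?_
      by_cases hx : x ≤ a i
      · simp [hx]
      · rw [if_neg hx]
        -- decompose b i into sup-irreducibles
        obtain ⟨s, hs, hsirr⟩ := exists_supIrred_decomposition (b i)
        rw [← hs]
        refine Finset.sup_le fun j hj => ?_
        -- find an inf-irreducible m with a i ≤ m and ¬ x ≤ m
        obtain ⟨t, ht, htirr⟩ := exists_infIrred_decomposition (a i)
        have hxt : ¬ x ≤ t.inf id := ht.symm ▸ hx
        rw [Finset.le_inf_iff] at hxt
        push_neg at hxt
        obtain ⟨m, hm, hxm⟩ := hxt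
        simp only [id_eq] at hxm
        have hp : InfIrred m ∧ SupIrred (id j) ∧ ∃ i', a i' ≤ m ∧ id j ≤ b i' :=
          ⟨htirr hm, hsirr hj, i, ht ▸ Finset.inf_le hm, hs ▸ Finset.le_sup hj⟩
        have := Finset.le_sup (f := fun p : I => if x ≤ p.1.1 then (⊥ : T) else p.1.2)
          (Finset.mem_univ (⟨(m, j), hp⟩ : I))
        simpa [hxm] using this
    · refine Finset.sup_le fun p _ => ?_
      obtain ⟨⟨m, j⟩, hmirr, hjirr, i, ham, hjb⟩ := p
      by_cases hx : x ≤ m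
      · simp [hx]
      · have hxa : ¬ x ≤ a i := fun hxa => hx (hxa.trans ham)
        have := Finset.le_sup (f := fun i : Fin n => if x ≤ a i then (⊥ : T) else b i)
          (Finset.mem_univ i)
        simp only [if_neg hxa] at this
        simpa [hx] using hjb.trans this
  exact ⟨⟨hAB, hBA⟩, ⟨hBC, fun ⟨n, a, b, _, _, hfe⟩ => ⟨n, a, b, hfe⟩⟩⟩
end
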